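/- Exact factorization of the fundamental solution through the heat kernel: for every Pe > 0, all x, y ∈ ℝ³ and all τ > 0, G(x,y,τ) = G_H(x,y,τ) · exp( (Pe/4)(x₁−y₁)(x₂+y₂) ) · ( 1 + f(x,y,τ) ), where f(x,y,τ) := exp( τ·Pe·[ (x₁−y₁)²/12 − (x₂+y₂)²/4 − τ(x₁−y₁)(x₂+y₂)/12 ] / ( 4(1+τ²/12) ) ) / √(1+τ²/12) − 1. -/

import Mathlib

open Real

/-- `p(x,y,τ)²` for the Smoluchowski shear fundamental solution. -/
noncomputable def psq (x y : EuclideanSpace ℝ (Fin 3)) (τ : ℝ) : ℝ :=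
  (x 0 - y 0 - τ * (x 1 + y 1) / 2) ^ 2 / (1 + τ ^ 2 / 12)
    + (x 1 - y 1) ^ 2 + (x 2 - y 2) ^ 2

/-- Time-domain fundamental solution of the Smoluchowski shear equation with
Péclet number `Pe`. -/
noncomputable def G (Pe : ℝ) (x y : EuclideanSpace ℝ (Fin 3)) (τ : ℝ) : ℝ :=
  (4 * Real.pi * τ) ^ (-(3 : ℝ) / 2) * (1 + τ ^ 2 / 12) ^ (-(1 : ℝ) / 2) *
    Real.exp (-(Pe * psq x y τ) / (4 * τ))

/-- Heat kernel on `ℝ³` with parameter `Pe`. -/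
noncomputable def GH (Pe : ℝ) (x y : EuclideanSpace ℝ (Fin 3)) (τ : ℝ) : ℝ :=
  (4 * Real.pi * τ) ^ (-(3 : ℝ) / 2) * Real.exp (-(Pe * ‖x - y‖ ^ 2) / (4 * τ))

/-- The correction factor `f`. -/
noncomputable def fcorr (Pe : ℝ) (x y : EuclideanSpace ℝ (Fin 3)) (τ : ℝ) : ℝ :=
  Real.exp (τ * Pe *
      ((x 0 - y 0) ^ 2 / 12 - (x 1 + y 1) ^ 2 / 4
        - τ * (x 0 - y 0) * (x 1 + y 1) / 12) / (4 * (1 + τ ^ 2 / 12)))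
    / Real.sqrt (1 + τ ^ 2 / 12) - 1

/-!
Write `a = x₁ − y₁`, `b = x₂ + y₂` and `c = 1 + τ²/12`. Completing the square,
`(a − τb/2)²/c − a² = −τ(ab + τa²/12 − τb²/4)/c`, so the Gaussian exponent of `G` is that of the
heat kernel plus `Pe·ab/4` plus the exponent in `f`; the remaining factor `c^{−1/2}` of `G` is the
`1/√c` in `1 + f`.
-/

lemma EuclideanSpace.norm_sub_sq_fin_three (x y : EuclideanSpace ℝ (Fin 3)) :
    ‖x - y‖ ^ 2 = (x 0 - y 0) ^ 2 + (x 1 - y 1) ^ 2 + (x 2 - y 2) ^ 2 := by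
  simp only [EuclideanSpace.real_norm_sq_eq, Fin.sum_univ_three, PiLp.sub_apply]

lemma Real.rpow_neg_one_div_two {x : ℝ} (hx : 0 ≤ x) : x ^ (-(1 : ℝ) / 2) = (√x)⁻¹ := by
  rw [Real.rpow_div_two_eq_sqrt _ hx, Real.rpow_neg_one]

lemma shear_exponent_split (Pe a b r τ : ℝ) (hτ : τ ≠ 0) :
    -(Pe * ((a - τ * b / 2) ^ 2 / (1 + τ ^ 2 / 12) + r)) / (4 * τ)
      = -(Pe * (a ^ 2 + r)) / (4 * τ) + Pe / 4 * a * b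
        + τ * Pe * (a ^ 2 / 12 - b ^ 2 / 4 - τ * a * b / 12) / (4 * (1 + τ ^ 2 / 12)) := by
  have hc : 1 + τ ^ 2 / 12 ≠ 0 := by positivity
  field_simp
  ring

lemma neg_mul_psq_div (Pe : ℝ) (x y : EuclideanSpace ℝ (Fin 3)) {τ : ℝ} (hτ : τ ≠ 0) :
    -(Pe * psq x y τ) / (4 * τ)
      = -(Pe * ‖x - y‖ ^ 2) / (4 * τ) + Pe / 4 * (x 0 - y 0) * (x 1 + y 1)
        + τ * Pe * ((x 0 - y 0) ^ 2 / 12 - (x 1 + y 1) ^ 2 / 4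
            - τ * (x 0 - y 0) * (x 1 + y 1) / 12) / (4 * (1 + τ ^ 2 / 12)) := by
  rw [EuclideanSpace.norm_sub_sq_fin_three, psq, add_assoc _ ((x 1 - y 1) ^ 2),
    shear_exponent_split _ _ _ _ _ hτ, add_assoc ((x 0 - y 0) ^ 2)]

lemma one_add_fcorr (Pe : ℝ) (x y : EuclideanSpace ℝ (Fin 3)) (τ : ℝ) :
    1 + fcorr Pe x y τ
      = Real.exp (τ * Pe * ((x 0 - y 0) ^ 2 / 12 - (x 1 + y 1) ^ 2 / 4
            - τ * (x 0 - y 0) * (x 1 + y 1) / 12) / (4 * (1 + τ ^ 2 / 12)))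
        * (√(1 + τ ^ 2 / 12))⁻¹ := by
  rw [fcorr]
  ring

theorem smoluchowski_fundamental_solution_factorization_general
    (Pe : ℝ) (x y : EuclideanSpace ℝ (Fin 3)) (τ : ℝ) (hτ : 0 < τ) :
    G Pe x y τ
      = GH Pe x y τ * Real.exp (Pe / 4 * (x 0 - y 0) * (x 1 + y 1))
          * (1 + fcorr Pe x y τ) := by
  rw [G, GH, one_add_fcorr, Real.rpow_neg_one_div_two (by positivity),
    neg_mul_psq_div Pe x y hτ.ne', Real.exp_add, Real.exp_add]
  ring

/-- Exact factorization of the fundamental solution through the heat kernel: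
`G(x,y,τ) = G_H(x,y,τ) exp((Pe/4)(x₁−y₁)(x₂+y₂)) (1 + f(x,y,τ))`. -/
theorem smoluchowski_fundamental_solution_factorization
    (Pe : ℝ) (hPe : 0 < Pe) (x y : EuclideanSpace ℝ (Fin 3)) (τ : ℝ) (hτ : 0 < τ) :
    G Pe x y τ
      = GH Pe x y τ * Real.exp (Pe / 4 * (x 0 - y 0) * (x 1 + y 1))
          * (1 + fcorr Pe x y τ) :=
  smoluchowski_fundamental_solution_factorization_general Pe x y τ hτ
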